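/- Divergence form of the Monge–Ampère operator: let u : ℝⁿ → ℝ be three times continuously differentiable (ContDiff ℝ 3). Then for every x, n · det(D²u(x)) = ∑_i ∂_i ( y ↦ ∑_j cof(D²u(y))_{ij} ∂_j u(y) )(x); that is, det D²u = (1/n) div( (cof D²u) Du ). -/

import Mathlib

/-!
By the product rule, `div ((cof D²u) Du) = ∑ᵢⱼ cofᵢⱼ ∂ᵢ∂ⱼu + ∑ⱼ ∂ⱼu ∑ᵢ ∂ᵢ cofᵢⱼ`. The first sum
is `tr (adj D²u · D²u) = n det D²u` by Laplace expansion. The second vanishes by the Piola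
identity: `cofᵢⱼ = det (D²u with row i replaced by eⱼ)`, and differentiating it row by row,
the terms for the pairs `(i, r)` and `(r, i)` are determinants differing by a swap of rows `i`
and `r`, because `∂ᵢ (row r) = ∂ᵣ (row i)` by symmetry of third derivatives; so they cancel.
-/

open Matrix

/-- The Hessian matrix of `u : ℝⁿ → ℝ`: `(hessian u x)_{ij} = ∂_i ∂_j u (x)`. -/
noncomputable def hessian {n : ℕ} (u : (Fin n → ℝ) → ℝ) (x : Fin n → ℝ) :
    Matrix (Fin n) (Fin n) ℝ :=
  Matrix.of fun i j =>
    fderiv ℝ (fun y => fderiv ℝ u y (Pi.single j 1)) x (Pi.single i 1)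

namespace Matrix

variable {ι R : Type*} [Fintype ι] [DecidableEq ι] [CommRing R]

theorem det_updateRow_updateRow_swap (A : Matrix ι ι R) {i r : ι} (hir : i ≠ r) (c w : ι → R) :
    ((A.updateRow i c).updateRow r w).det = -((A.updateRow r c).updateRow i w).det := by
  have hswap : ((A.updateRow r c).updateRow i w).submatrix (Equiv.swap i r) id
      = (A.updateRow i c).updateRow r w := by
    ext k l
    rcases eq_or_ne k i with rfl | hki
    · simp [updateRow_apply, hir, hir.symm]
    rcases eq_or_ne k r with rfl | hkr
    · simp [updateRow_apply]
    · simp [updateRow_apply, Equiv.swap_apply_of_ne_of_ne hki hkr, hki, hkr]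
  rw [← hswap, det_permute, Equiv.Perm.sign_swap hir]
  simp

theorem sum_sum_det_updateRow_updateRow_eq_zero (A : Matrix ι ι R) (c : ι → R)
    (T : ι → ι → ι → R) (hT : ∀ i r, T i r = T r i) :
    ∑ i, ∑ r, ((A.updateRow i c).updateRow r (if r = i then 0 else T i r)).det = 0 := by
  rw [← Fintype.sum_prod_type']
  refine Finset.sum_ninvolution Prod.swap (fun ⟨i, r⟩ => ?_) (fun ⟨i, r⟩ h => ?_)
    (fun _ => Finset.mem_univ _) Prod.swap_swap
  · rcases eq_or_ne r i with rfl | hri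
    · simp [det_eq_zero_of_row_eq_zero r]
    · simp [hri, hri.symm, det_updateRow_updateRow_swap _ hri.symm, hT i r]
  · rintro hswap
    obtain rfl : r = i := (Prod.ext_iff.1 hswap).1
    simp [det_eq_zero_of_row_eq_zero r] at h

theorem sum_adjugate_transpose_mul_self (A : Matrix ι ι R) :
    ∑ i, ∑ j, (A.adjugate)ᵀ i j * A i j = Fintype.card ι * A.det := by
  calc ∑ i, ∑ j, (A.adjugate)ᵀ i j * A i j = ∑ i : ι, A.det := by
        refine Finset.sum_congr rfl fun i _ => ?_
        simp only [det_eq_sum_mul_adjugate_row A i, transpose_apply, mul_comm]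
    _ = Fintype.card ι * A.det := by simp

end Matrix

noncomputable def Matrix.detContinuousMultilinearMap (ι 𝕜 : Type*) [Fintype ι] [DecidableEq ι]
    [NontriviallyNormedField 𝕜] : ContinuousMultilinearMap 𝕜 (fun _ : ι => ι → 𝕜) 𝕜 :=
  { (detRowAlternating : (ι → 𝕜) [⋀^ι]→ₗ[𝕜] 𝕜).toMultilinearMap with
    cont := continuous_id.matrix_det }

section DetCalculus

variable {ι 𝕜 E : Type*} [DecidableEq ι] [NontriviallyNormedField 𝕜] [NormedAddCommGroup E]
  [NormedSpace 𝕜 E] {M : E → Matrix ι ι 𝕜} {x : E}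

theorem hasFDerivAt_updateRow_row (hM : ∀ r, DifferentiableAt 𝕜 (fun y => M y r) x)
    (i : ι) (c : ι → 𝕜) (r : ι) :
    HasFDerivAt (fun y => (M y).updateRow i c r)
      (if r = i then (0 : E →L[𝕜] ι → 𝕜) else fderiv 𝕜 (fun y => M y r) x) x := by
  rcases eq_or_ne r i with rfl | hri
  · simpa using hasFDerivAt_const (𝕜 := 𝕜) c x
  · simpa [hri] using (hM r).hasFDerivAt

variable [Fintype ι]

theorem hasFDerivAt_det_of_rows {M' : ι → E →L[𝕜] ι → 𝕜}
    (hM : ∀ r, HasFDerivAt (fun y => M y r) (M' r) x) :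
    HasFDerivAt (fun y => (M y).det)
      (∑ r, (detContinuousMultilinearMap ι 𝕜).toContinuousLinearMap (M x) r ∘L M' r) x :=
  HasFDerivAt.multilinear_comp (detContinuousMultilinearMap ι 𝕜) hM

theorem differentiableAt_det_of_rows (hM : ∀ r, DifferentiableAt 𝕜 (fun y => M y r) x) :
    DifferentiableAt 𝕜 (fun y => (M y).det) x :=
  (hasFDerivAt_det_of_rows fun r => (hM r).hasFDerivAt).differentiableAt

theorem fderiv_det_apply (hM : ∀ r, DifferentiableAt 𝕜 (fun y => M y r) x) (v : E) :
    fderiv 𝕜 (fun y => (M y).det) x v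
      = ∑ r, ((M x).updateRow r (fderiv 𝕜 (fun y => M y r) x v)).det := by
  rw [(hasFDerivAt_det_of_rows fun r => (hM r).hasFDerivAt).fderiv, _root_.sum_apply]
  rfl

theorem differentiableAt_adjugate_apply (hM : ∀ r, DifferentiableAt 𝕜 (fun y => M y r) x)
    (j i : ι) : DifferentiableAt 𝕜 (fun y => (M y).adjugate j i) x := by
  simp only [adjugate_apply]
  exact differentiableAt_det_of_rows fun r => (hasFDerivAt_updateRow_row hM i _ r).differentiableAt

theorem fderiv_adjugate_apply_apply (hM : ∀ r, DifferentiableAt 𝕜 (fun y => M y r) x)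
    (j i : ι) (v : E) :
    fderiv 𝕜 (fun y => (M y).adjugate j i) x v
      = ∑ r, (((M x).updateRow i (Pi.single j 1)).updateRow r
          (if r = i then 0 else fderiv 𝕜 (fun y => M y r) x v)).det := by
  simp only [adjugate_apply]
  rw [fderiv_det_apply fun r => (hasFDerivAt_updateRow_row hM i _ r).differentiableAt]
  refine Finset.sum_congr rfl fun r _ => ?_
  rw [(hasFDerivAt_updateRow_row hM i _ r).fderiv]
  split_ifs <;> rfl

end DetCalculus

theorem sum_fderiv_sum_mul_apply_single {ι 𝕜 : Type*} [Fintype ι] [DecidableEq ι]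
    [NontriviallyNormedField 𝕜] {C : ι → ι → (ι → 𝕜) → 𝕜} {g : ι → (ι → 𝕜) → 𝕜}
    {x : ι → 𝕜} (hC : ∀ i j, DifferentiableAt 𝕜 (C i j) x)
    (hg : ∀ j, DifferentiableAt 𝕜 (g j) x) :
    ∑ i, fderiv 𝕜 (fun y => ∑ j, C i j y * g j y) x (Pi.single i 1)
      = ∑ j, (∑ i, fderiv 𝕜 (C i j) x (Pi.single i 1)) * g j x
        + ∑ i, ∑ j, C i j x * fderiv 𝕜 (g j) x (Pi.single i 1) := by
  have hprod : ∀ i, fderiv 𝕜 (fun y => ∑ j, C i j y * g j y) x (Pi.single i 1)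
      = ∑ j, (fderiv 𝕜 (C i j) x (Pi.single i 1) * g j x
        + C i j x * fderiv 𝕜 (g j) x (Pi.single i 1)) := by
    intro i
    rw [fderiv_fun_sum (A := fun j y => C i j y * g j y) fun j _ => (hC i j).mul (hg j),
      _root_.sum_apply]
    refine Finset.sum_congr rfl fun j _ => ?_
    rw [fderiv_fun_mul (hC i j) (hg j)]
    simp only [_root_.add_apply, _root_.smul_apply, smul_eq_mul]
    ring
  simp only [hprod, Finset.sum_add_distrib, Finset.sum_mul]
  rw [Finset.sum_comm (f := fun i j => fderiv 𝕜 (C i j) x (Pi.single i 1) * g j x)]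

noncomputable def partialDerivMatrix {ι : Type*} [DecidableEq ι] (φ : ι → (ι → ℝ) → ℝ)
    (y : ι → ℝ) : Matrix ι ι ℝ :=
  of fun i k => fderiv ℝ (φ k) y (Pi.single i 1)

section Piola

variable {ι : Type*} [Fintype ι] [DecidableEq ι] {φ : ι → (ι → ℝ) → ℝ} {x : ι → ℝ}

theorem hasFDerivAt_partialDerivMatrix_row (hφ : ∀ k, ContDiffAt ℝ 2 (φ k) x) (r : ι) :
    HasFDerivAt (fun y => partialDerivMatrix φ y r)
      (ContinuousLinearMap.pi fun k => (fderiv ℝ (fderiv ℝ (φ k)) x).flip (Pi.single r 1)) x := by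
  refine hasFDerivAt_pi.2 fun k => ?_
  have hd : DifferentiableAt ℝ (fderiv ℝ (φ k)) x :=
    ((hφ k).fderiv_right (m := 1) le_rfl).differentiableAt one_ne_zero
  have := hd.hasFDerivAt.clm_apply (hasFDerivAt_const (Pi.single r 1) x)
  simp only [ContinuousLinearMap.comp_zero, zero_add] at this
  exact this

/-- The Piola identity: as `partialDerivMatrix φ` is the transposed Jacobian of `φ`, this says
that the rows of the cofactor matrix of the Jacobian are divergence free. -/
theorem sum_fderiv_adjugate_partialDerivMatrix (hφ : ∀ k, ContDiffAt ℝ 2 (φ k) x) (j : ι) :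
    ∑ i, fderiv ℝ (fun y => (partialDerivMatrix φ y).adjugate j i) x (Pi.single i 1) = 0 := by
  have hrow := hasFDerivAt_partialDerivMatrix_row hφ
  simp_rw [fderiv_adjugate_apply_apply (fun r => (hrow r).differentiableAt), (hrow _).fderiv]
  refine sum_sum_det_updateRow_updateRow_eq_zero _ _ _ fun i r => funext fun k => ?_
  exact ((hφ k).isSymmSndFDerivAt (by simp)) _ _

end Piola

/-- Divergence form of the Monge–Ampère operator: for `u : ℝⁿ → ℝ` of class `C³`,
`n · det D²u = div((cof D²u) Du)`, where `cof M = (adjugate M)ᵀ` is the cofactor matrix. -/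
theorem det_hessian_eq_div_cof_grad {n : ℕ} (u : (Fin n → ℝ) → ℝ)
    (hu : ContDiff ℝ 3 u) (x : Fin n → ℝ) :
    (n : ℝ) * (hessian u x).det
      = ∑ i, fderiv ℝ
          (fun y => ∑ j, ((hessian u y).adjugate)ᵀ i j * fderiv ℝ u y (Pi.single j 1))
          x (Pi.single i 1) := by
  let grad : Fin n → (Fin n → ℝ) → ℝ := fun j y => fderiv ℝ u y (Pi.single j 1)
  have hgrad : ∀ j, ContDiff ℝ 2 (grad j) := fun j =>
    (hu.fderiv_right (by norm_num)).clm_apply contDiff_const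
  rw [show hessian u = partialDerivMatrix grad from rfl]
  have hrow : ∀ r, DifferentiableAt ℝ (fun y => partialDerivMatrix grad y r) x := fun r =>
    (hasFDerivAt_partialDerivMatrix_row (fun k => (hgrad k).contDiffAt) r).differentiableAt
  calc (n : ℝ) * (partialDerivMatrix grad x).det
      = ∑ i, ∑ j, ((partialDerivMatrix grad x).adjugate)ᵀ i j * partialDerivMatrix grad x i j := by
        rw [sum_adjugate_transpose_mul_self, Fintype.card_fin]
    _ = ∑ j, (∑ i, fderiv ℝ (fun y => (partialDerivMatrix grad y).adjugate j i) x
            (Pi.single i 1)) * grad j x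
        + ∑ i, ∑ j, ((partialDerivMatrix grad x).adjugate)ᵀ i j
            * partialDerivMatrix grad x i j := by
        simp [sum_fderiv_adjugate_partialDerivMatrix fun k => (hgrad k).contDiffAt]
    _ = _ := (sum_fderiv_sum_mul_apply_single (fun i j => differentiableAt_adjugate_apply hrow j i)
        fun j => (hgrad j).differentiable (by norm_num) x).symm
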